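/- Let f_t ∈ M(S) be a family of immersions meeting S orthogonally, with variation field φν + Df·ξ at t=0. Then along ∂Σ: (i) g(ξ, η) = 0, and (ii) ∂φ/∂η + h(ξ,η) + φ h^S(ν,ν) + h^S(ν, Df·ξ) = 0. If moreover ξ = μτ is tangent to ∂Σ, condition (ii) reduces via h(τ,η) + h^S(ν,∂f/∂τ) = 0 to ∂φ/∂η + φ h^S(ν,ν) = 0. -/

import Mathlib

set_option maxHeartbeats 1000000

open RealInnerProductSpace

lemma grad_fderiv_symm {E : Type*} [NormedAddCommGroup E] [InnerProductSpace ℝ E]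
    [CompleteSpace E] {ρ : E → ℝ} (hρ : ContDiff ℝ (⊤ : ℕ∞) ρ)
    {N : E → E} (hN : Differentiable ℝ N) (hgrad : ∀ p, gradient ρ p = N p) (p v w : E) :
    ⟪fderiv ℝ N p v, w⟫ = ⟪fderiv ℝ N p w, v⟫ := by
  have hd : Differentiable ℝ ρ := hρ.differentiable (by simp)
  have hd' : Differentiable ℝ (fderiv ℝ ρ) :=
    (hρ.fderiv_right (m := (⊤ : ℕ∞)) (le_of_eq (by simp))).differentiable (by simp)
  have hsym : ∀ a b : E, fderiv ℝ (fderiv ℝ ρ) p a b = fderiv ℝ (fderiv ℝ ρ) p b a :=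
    second_derivative_symmetric (fun y => (hd y).hasFDerivAt) (hd' p).hasFDerivAt
  have key : ∀ a b : E, ⟪fderiv ℝ N p a, b⟫ = fderiv ℝ (fderiv ℝ ρ) p a b := by
    intro a b
    have h1 : ∀ x : E, ⟪N x, b⟫ = fderiv ℝ ρ x b := by
      intro x
      rw [← hgrad x, gradient, InnerProductSpace.toDual_symm_apply]
    have h2 : HasFDerivAt (fun x : E => ⟪N x, b⟫)
        ((fderivInnerCLM ℝ (N p, b)).comp ((fderiv ℝ N p).prod 0)) p :=
      (hN p).hasFDerivAt.inner ℝ (hasFDerivAt_const b p)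
    have h3 : HasFDerivAt (fun x : E => fderiv ℝ ρ x b)
        ((fderiv ℝ ρ p).comp (0 : E →L[ℝ] E) + (fderiv ℝ (fderiv ℝ ρ) p).flip b) p :=
      (hd' p).hasFDerivAt.clm_apply (hasFDerivAt_const b p)
    have h4 : HasFDerivAt (fun x : E => ⟪N x, b⟫)
        ((fderiv ℝ ρ p).comp (0 : E →L[ℝ] E) + (fderiv ℝ (fderiv ℝ ρ) p).flip b) p := by
      simpa only [h1] using h3
    have := h2.unique h4
    have happ := congrArg (fun L : E →L[ℝ] ℝ => L a) this
    simpa [fderivInnerCLM_apply] using happ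
  rw [key, key, hsym]

/-- for a family `f_t ∈ M(S)` of immersions meeting `S = ρ⁻¹(0)`
orthogonally, with variation field `φν + Df·ξ` at `t = 0`, along the boundary:
(i) `g(ξ,η) = 0` (equivalently `⟨Df·ξ, N^S∘f⟩ = 0`);
(ii) `∂φ/∂η + h(ξ,η) + φ h^S(ν,ν) + h^S(ν, Df·ξ) = 0`;
and if `ξ = μτ` is tangent to `∂Σ`, then (ii) reduces to
`∂φ/∂η + φ h^S(ν,ν) = 0`.  Here `h^S(X,Y) = -⟨D_X N^S, Y⟩`. -/
theorem stmt_13 (f : (Fin 2 → ℝ) → ℝ → EuclideanSpace ℝ (Fin 3))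
    (hf : ContDiff ℝ (⊤ : ℕ∞) (fun p : (Fin 2 → ℝ) × ℝ => f p.1 p.2))
    (ν : (Fin 2 → ℝ) → ℝ → EuclideanSpace ℝ (Fin 3))
    (hνsm : ContDiff ℝ (⊤ : ℕ∞) (fun p : (Fin 2 → ℝ) × ℝ => ν p.1 p.2))
    (hν1 : ∀ x t, ‖ν x t‖ = 1)
    (hν2 : ∀ x t (i : Fin 2), ⟪ν x t, fderiv ℝ (fun y => f y t) x (Pi.single i 1)⟫ = 0)
    (ρ : EuclideanSpace ℝ (Fin 3) → ℝ) (hρ : ContDiff ℝ (⊤ : ℕ∞) ρ)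
    (N : EuclideanSpace ℝ (Fin 3) → EuclideanSpace ℝ (Fin 3)) (hN : ContDiff ℝ (⊤ : ℕ∞) N)
    (hgrad : ∀ p, gradient ρ p = N p)
    (c : ℝ → Fin 2 → ℝ) (hc : ContDiff ℝ (⊤ : ℕ∞) c)
    -- the boundary stays on `S`, where `N` is a unit normal field:
    (hboundary : ∀ s t, ρ (f (c s) t) = 0)
    (hNunit : ∀ s t, ‖N (f (c s) t)‖ = 1)
    -- orthogonal contact for every `t`: `∂f/∂η = N^S ∘ f` along `∂Σ`:
    (ηv : ℝ → ℝ → Fin 2 → ℝ)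
    (hηsm : ContDiff ℝ (⊤ : ℕ∞) (fun p : ℝ × ℝ => ηv p.1 p.2))
    (hconormal : ∀ s t, fderiv ℝ (fun y => f y t) (c s) (ηv s t) = N (f (c s) t))
    -- decomposition of the variation field at `t = 0`:
    (φ : (Fin 2 → ℝ) → ℝ) (hφ : ContDiff ℝ (⊤ : ℕ∞) φ)
    (ξ : (Fin 2 → ℝ) → Fin 2 → ℝ) (hξ : ContDiff ℝ (⊤ : ℕ∞) ξ)
    (hvar : ∀ x, deriv (fun t => f x t) 0
      = φ x • ν x 0 + fderiv ℝ (fun y => f y 0) x (ξ x)) :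
    (∀ s, ⟪fderiv ℝ (fun y => f y 0) (c s) (ξ (c s)), N (f (c s) 0)⟫ = 0) ∧
    (∀ s,
      fderiv ℝ φ (c s) (ηv s 0)
        + ⟪fderiv ℝ (fun y => fderiv ℝ (fun z => f z 0) y (ηv s 0)) (c s) (ξ (c s)),
            ν (c s) 0⟫
        + φ (c s) * (-⟪fderiv ℝ N (f (c s) 0) (ν (c s) 0), ν (c s) 0⟫)
        + (-⟪fderiv ℝ N (f (c s) 0) (ν (c s) 0),
              fderiv ℝ (fun y => f y 0) (c s) (ξ (c s))⟫) = 0) ∧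
    (∀ μ : ℝ → ℝ, (∀ s, ξ (c s) = μ s • deriv c s) →
      ∀ s, fderiv ℝ φ (c s) (ηv s 0)
        + φ (c s) * (-⟪fderiv ℝ N (f (c s) 0) (ν (c s) 0), ν (c s) 0⟫) = 0) := by
  have hFd : Differentiable ℝ (fun p : (Fin 2 → ℝ) × ℝ => f p.1 p.2) :=
    hf.differentiable (by simp)
  set F' : (Fin 2 → ℝ) × ℝ → ((Fin 2 → ℝ) × ℝ →L[ℝ] EuclideanSpace ℝ (Fin 3)) :=
    fderiv ℝ (fun p : (Fin 2 → ℝ) × ℝ => f p.1 p.2) with hF'def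
  have hF'd : Differentiable ℝ F' :=
    (hf.fderiv_right (m := (⊤ : ℕ∞)) (le_of_eq (by simp))).differentiable (by simp)
  have hGd : Differentiable ℝ (fun p : (Fin 2 → ℝ) × ℝ => ν p.1 p.2) :=
    hνsm.differentiable (by simp)
  set G' : (Fin 2 → ℝ) × ℝ → ((Fin 2 → ℝ) × ℝ →L[ℝ] EuclideanSpace ℝ (Fin 3)) :=
    fderiv ℝ (fun p : (Fin 2 → ℝ) × ℝ => ν p.1 p.2) with hG'def
  have hNd : Differentiable ℝ N := hN.differentiable (by simp)
  have hNsym := grad_fderiv_symm hρ hNd hgrad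
  -- spatial and time derivatives of f
  have hA : ∀ (x : Fin 2 → ℝ) (t : ℝ), HasFDerivAt (fun y => f y t)
      ((F' (x, t)).comp (ContinuousLinearMap.inl ℝ (Fin 2 → ℝ) ℝ)) x := fun x t =>
    (hFd (x, t)).hasFDerivAt.comp (f := fun e => (e, t)) x (hasFDerivAt_prodMk_left (𝕜 := ℝ) x t)
  have hAq : ∀ x t v, fderiv ℝ (fun y => f y t) x v = F' (x, t) (v, 0) := by
    intro x t v; rw [(hA x t).fderiv]; rfl
  have hB : ∀ (x : Fin 2 → ℝ) (t : ℝ), HasDerivAt (fun t' => f x t') (F' (x, t) (0, 1)) t :=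
    fun x t => (hFd (x, t)).hasFDerivAt.comp_hasDerivAt t
      (HasDerivAt.prodMk (hasDerivAt_const t x) (hasDerivAt_id t))
  have hBν : ∀ (x : Fin 2 → ℝ) (t : ℝ), HasDerivAt (fun t' => ν x t') (G' (x, t) (0, 1)) t :=
    fun x t => (hGd (x, t)).hasFDerivAt.comp_hasDerivAt t
      (HasDerivAt.prodMk (hasDerivAt_const t x) (hasDerivAt_id t))
  have hν0' : ∀ (x : Fin 2 → ℝ) (t : ℝ), HasFDerivAt (fun y => ν y t)
      ((G' (x, t)).comp (ContinuousLinearMap.inl ℝ (Fin 2 → ℝ) ℝ)) x := fun x t =>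
    (hGd (x, t)).hasFDerivAt.comp (f := fun e => (e, t)) x (hasFDerivAt_prodMk_left (𝕜 := ℝ) x t)
  -- ν is orthogonal to all spatial derivatives
  have horth : ∀ (x : Fin 2 → ℝ) (t : ℝ) (v : Fin 2 → ℝ),
      ⟪ν x t, F' (x, t) (v, 0)⟫ = 0 := by
    intro x t v
    have hv : ((v, (0 : ℝ)) : (Fin 2 → ℝ) × ℝ)
        = v 0 • (((Pi.single 0 1 : Fin 2 → ℝ), (0 : ℝ)) : (Fin 2 → ℝ) × ℝ) + v 1 • (((Pi.single 1 1 : Fin 2 → ℝ), (0 : ℝ)) : (Fin 2 → ℝ) × ℝ) := by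
      rw [Prod.ext_iff]
      constructor
      · have h1 : v = v 0 • (Pi.single 0 1 : Fin 2 → ℝ) + v 1 • (Pi.single 1 1 : Fin 2 → ℝ) := by
          funext j; fin_cases j <;> simp
        simpa using h1
      · simp
    rw [hv, map_add, map_smul, map_smul, inner_add_right, real_inner_smul_right,
      real_inner_smul_right, ← hAq x t (Pi.single 0 1), ← hAq x t (Pi.single 1 1),
      hν2 x t 0, hν2 x t 1]
    ring
  have hνN : ∀ s t, ⟪ν (c s) t, N (f (c s) t)⟫ = 0 := by
    intro s t; rw [← hconormal s t, hAq]; exact horth _ _ _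
  -- symmetry of second derivative of f
  have hsym : ∀ (p : (Fin 2 → ℝ) × ℝ) (u w : (Fin 2 → ℝ) × ℝ),
      fderiv ℝ F' p u w = fderiv ℝ F' p w u := fun p =>
    second_derivative_symmetric (fun q => (hFd q).hasFDerivAt) (hF'd p).hasFDerivAt
  -- variation field identity
  have hvar' : ∀ x, F' (x, 0) (0, 1) = φ x • ν x 0 + F' (x, 0) (ξ x, 0) := by
    intro x; rw [← (hB x 0).deriv, hvar x, hAq]
  -- ν unit
  have hνunit : ∀ x t, ⟪ν x t, ν x t⟫ = 1 := fun x t => by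
    rw [real_inner_self_eq_norm_mul_norm, hν1, one_mul]
  have hνDν : ∀ (x : Fin 2 → ℝ) (t : ℝ) (w : (Fin 2 → ℝ) × ℝ),
      ⟪ν x t, G' (x, t) w⟫ = 0 := by
    intro x t w
    have h2 : HasFDerivAt (fun q : (Fin 2 → ℝ) × ℝ => ⟪ν q.1 q.2, ν q.1 q.2⟫)
        ((fderivInnerCLM ℝ (ν x t, ν x t)).comp ((G' (x, t)).prod (G' (x, t)))) (x, t) :=
      (hGd (x, t)).hasFDerivAt.inner ℝ (hGd (x, t)).hasFDerivAt
    have h3 : (fun q : (Fin 2 → ℝ) × ℝ => ⟪ν q.1 q.2, ν q.1 q.2⟫) = fun _ => (1 : ℝ) :=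
      funext fun q => hνunit q.1 q.2
    rw [h3] at h2
    have h4 := h2.unique (hasFDerivAt_const 1 (x, t))
    have h5 := congrArg (fun L : (Fin 2 → ℝ) × ℝ →L[ℝ] ℝ => L w) h4
    simp only [ContinuousLinearMap.comp_apply, ContinuousLinearMap.prod_apply,
      fderivInnerCLM_apply, ContinuousLinearMap.zero_apply] at h5
    rw [real_inner_comm (ν x t) ((G' (x, t)) w)] at h5
    linarith
  -- PART (i)
  have part1 : ∀ s, ⟪fderiv ℝ (fun y => f y 0) (c s) (ξ (c s)), N (f (c s) 0)⟫ = 0 := by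
    intro s
    have hρt : HasDerivAt (fun t => ρ (f (c s) t))
        (fderiv ℝ ρ (f (c s) 0) (F' (c s, 0) (0, 1))) 0 :=
      ((hρ.differentiable (by simp) _).hasFDerivAt).comp_hasDerivAt 0 (hB (c s) 0)
    have h0 : (fun t => ρ (f (c s) t)) = fun _ => (0 : ℝ) := funext fun t => hboundary s t
    rw [h0] at hρt
    have h1 : fderiv ℝ ρ (f (c s) 0) (F' (c s, 0) (0, 1)) = 0 :=
      hρt.unique (hasDerivAt_const 0 0)
    have h2 : ⟪N (f (c s) 0), F' (c s, 0) (0, 1)⟫ = 0 := by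
      rw [← hgrad, gradient, InnerProductSpace.toDual_symm_apply]; exact h1
    rw [hvar' (c s), inner_add_right, real_inner_smul_right] at h2
    have h3 : ⟪N (f (c s) 0), ν (c s) 0⟫ = 0 := by
      rw [real_inner_comm]; exact hνN s 0
    rw [hAq, real_inner_comm]
    rw [h3] at h2
    linarith
  -- shared computation for (ii) and (iii): the statement's second-fundamental-form term
  have hstmt : ∀ s, fderiv ℝ (fun y => fderiv ℝ (fun z => f z 0) y (ηv s 0)) (c s) (ξ (c s))
      = fderiv ℝ F' (c s, 0) (ξ (c s), 0) (ηv s 0, 0) := by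
    intro s
    have hfun2 : (fun y => fderiv ℝ (fun z => f z 0) y (ηv s 0))
        = fun y => F' (y, 0) (ηv s 0, 0) := funext fun y => hAq y 0 (ηv s 0)
    rw [hfun2]
    have hAF' : HasFDerivAt (fun y => F' (y, 0))
        ((fderiv ℝ F' (c s, 0)).comp (ContinuousLinearMap.inl ℝ (Fin 2 → ℝ) ℝ)) (c s) :=
      (hF'd (c s, 0)).hasFDerivAt.comp (c s) (hasFDerivAt_prodMk_left (𝕜 := ℝ) (c s) (0:ℝ))
    have hE := hAF'.clm_apply (hasFDerivAt_const ((ηv s 0, 0) : (Fin 2 → ℝ) × ℝ) (c s))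
    rw [hE.fderiv]
    simp
  -- key1: time-derivative of ⟪ν, N∘f⟫ = 0 and ⟪ν, Df η⟫ = 0
  have key1 : ∀ s, ⟪ν (c s) 0, fderiv ℝ N (f (c s) 0) (F' (c s, 0) (0, 1))⟫
      = ⟪ν (c s) 0, fderiv ℝ F' (c s, 0) (0, 1) (ηv s 0, 0)⟫ := by
    intro s
    have hNf : F' (c s, 0) (ηv s 0, 0) = N (f (c s) 0) := by
      rw [← hAq]; exact hconormal s 0
    have hC1 : HasDerivAt (fun t => F' (c s, t)) (fderiv ℝ F' (c s, 0) (0, 1)) 0 :=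
      (hF'd (c s, 0)).hasFDerivAt.comp_hasDerivAt 0
        (HasDerivAt.prodMk (hasDerivAt_const 0 (c s)) (hasDerivAt_id 0))
    have hC1a : HasDerivAt (fun t => F' (c s, t) (ηv s 0, 0))
        (fderiv ℝ F' (c s, 0) (0, 1) (ηv s 0, 0)) 0 := by
      simpa using hC1.clm_apply (hasDerivAt_const 0 ((ηv s 0, 0) : (Fin 2 → ℝ) × ℝ))
    have hH := (hBν (c s) 0).inner ℝ hC1a
    have hHfn : (fun t => ⟪ν (c s) t, F' (c s, t) (ηv s 0, 0)⟫) = fun _ => (0 : ℝ) :=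
      funext fun t => horth (c s) t (ηv s 0)
    rw [hHfn] at hH
    have eqH := hH.unique (hasDerivAt_const 0 0)
    have hNc : HasDerivAt (fun t => N (f (c s) t))
        (fderiv ℝ N (f (c s) 0) (F' (c s, 0) (0, 1))) 0 :=
      (hNd _).hasFDerivAt.comp_hasDerivAt 0 (hB (c s) 0)
    have hG := (hBν (c s) 0).inner ℝ hNc
    have hGfn : (fun t => ⟪ν (c s) t, N (f (c s) t)⟫) = fun _ => (0 : ℝ) :=
      funext fun t => hνN s t
    rw [hGfn] at hG
    have eqG := hG.unique (hasDerivAt_const 0 0)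
    rw [hNf] at eqH
    linarith
  -- key2: spatial derivative of the variation-field identity
  have key2 : ∀ s, ⟪ν (c s) 0, fderiv ℝ F' (c s, 0) (ηv s 0, 0) (0, 1)⟫
      = fderiv ℝ φ (c s) (ηv s 0)
        + ⟪ν (c s) 0, fderiv ℝ F' (c s, 0) (ηv s 0, 0) (ξ (c s), 0)⟫ := by
    intro s
    have hAF' : HasFDerivAt (fun y => F' (y, 0))
        ((fderiv ℝ F' (c s, 0)).comp (ContinuousLinearMap.inl ℝ (Fin 2 → ℝ) ℝ)) (c s) :=
      (hF'd (c s, 0)).hasFDerivAt.comp (c s) (hasFDerivAt_prodMk_left (𝕜 := ℝ) (c s) (0 : ℝ))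
    have hDlhs := hAF'.clm_apply (hasFDerivAt_const ((0, 1) : (Fin 2 → ℝ) × ℝ) (c s))
    have hφ' : HasFDerivAt φ (fderiv ℝ φ (c s)) (c s) :=
      (hφ.differentiable (by simp) _).hasFDerivAt
    have hsmul := hφ'.smul (hν0' (c s) 0)
    have hxi : HasFDerivAt (fun y => ((ξ y, (0 : ℝ)) : (Fin 2 → ℝ) × ℝ))
        ((fderiv ℝ ξ (c s)).prod 0) (c s) :=
      HasFDerivAt.prodMk ((hξ.differentiable (by simp) _).hasFDerivAt) (hasFDerivAt_const 0 (c s))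
    have hterm2 := hAF'.clm_apply hxi
    have hDrhs := hsmul.add hterm2
    have hfun : (fun y => F' (y, 0) ((0 : Fin 2 → ℝ), (1 : ℝ)))
        = fun y => φ y • ν y 0 + F' (y, 0) (ξ y, 0) := funext fun y => hvar' y
    rw [hfun] at hDlhs
    have eqD := hDlhs.unique hDrhs
    have eqDa := congrArg
      (fun L : (Fin 2 → ℝ) →L[ℝ] EuclideanSpace ℝ (Fin 3) => L (ηv s 0)) eqD
    simp only [ContinuousLinearMap.add_apply, ContinuousLinearMap.comp_apply,
      ContinuousLinearMap.flip_apply, ContinuousLinearMap.coe_smul', Pi.smul_apply,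
      ContinuousLinearMap.smulRight_apply, ContinuousLinearMap.prod_apply,
      ContinuousLinearMap.zero_apply, ContinuousLinearMap.inl_apply, map_zero,
      zero_add, add_zero] at eqDa
    have h9 := congrArg (fun z : EuclideanSpace ℝ (Fin 3) => (⟪ν (c s) 0, z⟫ : ℝ)) eqDa
    simp only [inner_add_right, real_inner_smul_right, hνDν, hνunit, horth,
      mul_zero, mul_one, add_zero, zero_add] at h9
    linarith [h9]
  -- PART (ii)
  have part2 : ∀ s,
      fderiv ℝ φ (c s) (ηv s 0)
        + ⟪fderiv ℝ (fun y => fderiv ℝ (fun z => f z 0) y (ηv s 0)) (c s) (ξ (c s)),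
            ν (c s) 0⟫
        + φ (c s) * (-⟪fderiv ℝ N (f (c s) 0) (ν (c s) 0), ν (c s) 0⟫)
        + (-⟪fderiv ℝ N (f (c s) 0) (ν (c s) 0),
              fderiv ℝ (fun y => f y 0) (c s) (ξ (c s))⟫) = 0 := by
    intro s
    have k1 := key1 s
    have k2 := key2 s
    have e1 : ⟪ν (c s) 0, fderiv ℝ N (f (c s) 0) (F' (c s, 0) (0, 1))⟫
        = φ (c s) * ⟪ν (c s) 0, fderiv ℝ N (f (c s) 0) (ν (c s) 0)⟫
          + ⟪ν (c s) 0, fderiv ℝ N (f (c s) 0) (F' (c s, 0) (ξ (c s), 0))⟫ := by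
      rw [hvar' (c s), map_add, map_smul, inner_add_right, real_inner_smul_right]
    have e2 : ⟪ν (c s) 0, fderiv ℝ N (f (c s) 0) (ν (c s) 0)⟫
        = ⟪fderiv ℝ N (f (c s) 0) (ν (c s) 0), ν (c s) 0⟫ := real_inner_comm _ _
    have e3 : ⟪ν (c s) 0, fderiv ℝ N (f (c s) 0) (F' (c s, 0) (ξ (c s), 0))⟫
        = ⟪fderiv ℝ N (f (c s) 0) (ν (c s) 0), F' (c s, 0) (ξ (c s), 0)⟫ :=
      (real_inner_comm _ _).trans
        (hNsym (f (c s) 0) (F' (c s, 0) (ξ (c s), 0)) (ν (c s) 0))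
    rw [e2, e3] at e1
    rw [hsym (c s, 0) (0, 1) (ηv s 0, 0)] at k1
    have hgoal1 : ⟪fderiv ℝ (fun y => fderiv ℝ (fun z => f z 0) y (ηv s 0)) (c s) (ξ (c s)),
        ν (c s) 0⟫ = ⟪ν (c s) 0, fderiv ℝ F' (c s, 0) (ηv s 0, 0) (ξ (c s), 0)⟫ := by
      rw [hstmt s, hsym (c s, 0) (ξ (c s), 0) (ηv s 0, 0)]
      exact real_inner_comm _ _
    rw [hAq (c s) 0 (ξ (c s))]
    linarith [k1, k2, e1, hgoal1]
  -- PART (iii)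
  have part3 : ∀ μ : ℝ → ℝ, (∀ s, ξ (c s) = μ s • deriv c s) →
      ∀ s, fderiv ℝ φ (c s) (ηv s 0)
        + φ (c s) * (-⟪fderiv ℝ N (f (c s) 0) (ν (c s) 0), ν (c s) 0⟫) = 0 := by
    intro μ hμ s
    have p2 := part2 s
    have hc' : HasDerivAt c (deriv c s) s := (hc.differentiable (by simp) s).hasDerivAt
    have hν_s : HasDerivAt (fun s' => ν (c s') 0) (G' (c s, 0) (deriv c s, 0)) s := by
      simpa [Function.comp_def] using (hν0' (c s) 0).comp_hasDerivAt s hc'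
    have hf_s : HasDerivAt (fun s' => f (c s') 0) (F' (c s, 0) (deriv c s, 0)) s := by
      simpa [Function.comp_def] using (hA (c s) 0).comp_hasDerivAt s hc'
    have hN_s : HasDerivAt (fun s' => N (f (c s') 0))
        (fderiv ℝ N (f (c s) 0) (F' (c s, 0) (deriv c s, 0))) s :=
      (hNd _).hasFDerivAt.comp_hasDerivAt s hf_s
    have hAF' : HasFDerivAt (fun y => F' (y, 0))
        ((fderiv ℝ F' (c s, 0)).comp (ContinuousLinearMap.inl ℝ (Fin 2 → ℝ) ℝ)) (c s) :=
      (hF'd (c s, 0)).hasFDerivAt.comp (c s) (hasFDerivAt_prodMk_left (𝕜 := ℝ) (c s) (0 : ℝ))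
    have hE := hAF'.clm_apply (hasFDerivAt_const ((ηv s 0, 0) : (Fin 2 → ℝ) × ℝ) (c s))
    have hFp_s : HasDerivAt (fun s' => F' (c s', 0) (ηv s 0, 0))
        (fderiv ℝ F' (c s, 0) (deriv c s, 0) (ηv s 0, 0)) s := by
      simpa [Function.comp_def] using hE.comp_hasDerivAt s hc'
    have hK2 := hν_s.inner ℝ hFp_s
    have hK2fn : (fun s' => ⟪ν (c s') 0, F' (c s', 0) (ηv s 0, 0)⟫) = fun _ => (0 : ℝ) :=
      funext fun s' => horth (c s') 0 (ηv s 0)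
    rw [hK2fn] at hK2
    have eqK2 := hK2.unique (hasDerivAt_const s 0)
    have hK := hν_s.inner ℝ hN_s
    have hKfn : (fun s' => ⟪ν (c s') 0, N (f (c s') 0)⟫) = fun _ => (0 : ℝ) :=
      funext fun s' => hνN s' 0
    rw [hKfn] at hK
    have eqK := hK.unique (hasDerivAt_const s 0)
    have hNf : F' (c s, 0) (ηv s 0, 0) = N (f (c s) 0) := by
      rw [← hAq]; exact hconormal s 0
    rw [hNf] at eqK2
    have keyτ : ⟪ν (c s) 0, fderiv ℝ F' (c s, 0) (deriv c s, 0) (ηv s 0, 0)⟫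
        = ⟪fderiv ℝ N (f (c s) 0) (ν (c s) 0), F' (c s, 0) (deriv c s, 0)⟫ := by
      have h1 : ⟪ν (c s) 0, fderiv ℝ N (f (c s) 0) (F' (c s, 0) (deriv c s, 0))⟫
          = ⟪fderiv ℝ N (f (c s) 0) (ν (c s) 0), F' (c s, 0) (deriv c s, 0)⟫ := by
        rw [real_inner_comm, hNsym]
      linarith [eqK, eqK2, h1]
    have hξs : ((ξ (c s), (0 : ℝ)) : (Fin 2 → ℝ) × ℝ)
        = μ s • ((deriv c s, 0) : (Fin 2 → ℝ) × ℝ) := by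
      rw [hμ s]; rw [Prod.ext_iff]; constructor <;> simp
    have hT1 : fderiv ℝ F' (c s, 0) (ξ (c s), 0) (ηv s 0, 0)
        = μ s • fderiv ℝ F' (c s, 0) (deriv c s, 0) (ηv s 0, 0) := by
      rw [hξs, map_smul, ContinuousLinearMap.smul_apply]
    have hT2 : F' (c s, 0) (ξ (c s), 0) = μ s • F' (c s, 0) (deriv c s, 0) := by
      rw [hξs, map_smul]
    have h2 : ⟪fderiv ℝ F' (c s, 0) (deriv c s, 0) (ηv s 0, 0), ν (c s) 0⟫
        = ⟪fderiv ℝ N (f (c s) 0) (ν (c s) 0), F' (c s, 0) (deriv c s, 0)⟫ := by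
      rw [real_inner_comm]; exact keyτ
    have b1 : ⟪fderiv ℝ (fun y => fderiv ℝ (fun z => f z 0) y (ηv s 0)) (c s) (ξ (c s)),
        ν (c s) 0⟫
        = μ s * ⟪fderiv ℝ N (f (c s) 0) (ν (c s) 0), F' (c s, 0) (deriv c s, 0)⟫ := by
      rw [hstmt s, hT1, real_inner_smul_left, h2]
    have b2 : ⟪fderiv ℝ N (f (c s) 0) (ν (c s) 0),
        fderiv ℝ (fun y => f y 0) (c s) (ξ (c s))⟫
        = μ s * ⟪fderiv ℝ N (f (c s) 0) (ν (c s) 0), F' (c s, 0) (deriv c s, 0)⟫ := by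
      rw [hAq (c s) 0 (ξ (c s)), hT2, real_inner_smul_right]
    linarith [p2, b1, b2]
  exact ⟨part1, part2, part3⟩
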